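/- Let 1 < k < n. The connected subgraph arrangement 𝒜_{Δ_{n,k}} in ℚ^{n+1} is the restriction of 𝒜_{A_{n+1,k+1}} (an arrangement in ℚ^{n+2}) to the coordinate hyperplane ker(x_{k+1}): after identifying ker(x_{k+1}) ⊆ ℚ^{n+2} with ℚ^{n+1} by deleting the (k+1)-st coordinate (i.e. relabeling x_i ↦ x_{i−1} for k+2 ≤ i ≤ n+2), the set {H ∩ ker(x_{k+1}) : H ∈ 𝒜_{A_{n+1,k+1}}, H ≠ ker(x_{k+1})} equals the set of hyperplanes of 𝒜_{Δ_{n,k}}. -/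

import Mathlib

/-!
Restricting a connected subgraph arrangement `𝒜_G` to the coordinate hyperplane `x_v = 0` yields
the connected subgraph arrangement of the graph obtained from `G` by eliminating `v`, i.e. deleting
`v` and turning its neighbourhood into a clique: `H_I` restricts to `H_{I ∖ {v}}`, and
`I ↦ I ∖ {v}` maps the connected sets other than `{v}` onto the connected sets of the eliminated
graph (a walk through `v` is shortcut along the clique; conversely `v` is put back when the set
meets its neighbourhood). `Δ_{n,k}` is `A_{n+1,k+1}` with its branch vertex `k+1` eliminated.
-/

open Finset

/-- The linear form `∑_{i ∈ I} x_i` on `ℚ^n`. -/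
noncomputable def linForm {n : ℕ} (I : Finset (Fin n)) : (Fin n → ℚ) →ₗ[ℚ] ℚ :=
  ∑ i ∈ I, LinearMap.proj i

/-- `I` is a nonempty subset of vertices inducing a connected subgraph of `G`. -/
def ConnSet {n : ℕ} (G : SimpleGraph (Fin n)) (I : Finset (Fin n)) : Prop :=
  I.Nonempty ∧ (G.induce (↑I : Set (Fin n))).Connected

/-- The connected subgraph arrangement of `G`, as a set of hyperplanes of `ℚ^n`. -/
def csa {n : ℕ} (G : SimpleGraph (Fin n)) : Set (Submodule ℚ (Fin n → ℚ)) :=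
  {H | ∃ I : Finset (Fin n), ConnSet G I ∧ H = LinearMap.ker (linForm I)}

/-- The almost path graph `A_{n,k}` (paper notation, vertices `1,…,n+1` realized as
`Fin (n+1)` with `0,…,n`): a path `1–⋯–n` together with the edge `{k, n+1}`. -/
def almostPath (n k : ℕ) : SimpleGraph (Fin (n + 1)) :=
  SimpleGraph.fromRel (fun a b =>
    (a.val + 1 = b.val ∧ b.val < n) ∨ (a.val = k - 1 ∧ b.val = n))

/-- The path-with-triangle graph `Δ_{n,k}` (paper notation): a path `1–⋯–n` together
with the edges `{k, n+1}` and `{k+1, n+1}`. -/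
def pathTriangle (n k : ℕ) : SimpleGraph (Fin (n + 1)) :=
  SimpleGraph.fromRel (fun a b =>
    (a.val + 1 = b.val ∧ b.val < n) ∨ (a.val = k - 1 ∧ b.val = n) ∨ (a.val = k ∧ b.val = n))

/-- The module of `𝒜_G`-derivations `D(𝒜_G) ⊆ Der_ℚ(ℚ[x_1,…,x_n])`. -/
noncomputable def derModule {n : ℕ} (G : SimpleGraph (Fin n)) :
    Submodule (MvPolynomial (Fin n) ℚ)
      (Derivation ℚ (MvPolynomial (Fin n) ℚ) (MvPolynomial (Fin n) ℚ)) where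
  carrier := {θ | ∀ I : Finset (Fin n), ConnSet G I →
    (∑ i ∈ I, MvPolynomial.X i) ∣ θ (∑ i ∈ I, MvPolynomial.X i)}
  add_mem' := by
    intro a b ha hb I hI
    rw [Derivation.add_apply]
    exact dvd_add (ha I hI) (hb I hI)
  zero_mem' := by
    intro I hI
    simp
  smul_mem' := by
    intro c θ hθ I hI
    rw [Derivation.smul_apply, smul_eq_mul]
    exact (hθ I hI).mul_left c

/-- The linear isomorphism of `ℚ^{n+1}` onto the coordinate hyperplane
`ker x_p ⊆ ℚ^{n+2}`: it inserts a zero at position `p` (i.e. it realizes the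
identification of `ker x_p` with `ℚ^{n+1}` obtained by deleting the `p`-th coordinate
and relabeling the later coordinates). -/
noncomputable def insertZero {n : ℕ} (p : Fin (n + 2)) :
    (Fin (n + 1) → ℚ) →ₗ[ℚ] (Fin (n + 2) → ℚ) :=
  LinearMap.pi fun i =>
    if h : ∃ m : Fin (n + 1), p.succAbove m = i
    then (LinearMap.proj h.choose : (Fin (n + 1) → ℚ) →ₗ[ℚ] ℚ)
    else 0

namespace SimpleGraph

variable {V W : Type*}

theorem Reachable.of_adj_reachable {G : SimpleGraph V} {H : SimpleGraph W} {f : V → W}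
    (hf : ∀ a b, G.Adj a b → H.Reachable (f a) (f b)) {u v : V} (h : G.Reachable u v) :
    H.Reachable (f u) (f v) := by
  rw [reachable_iff_reflTransGen] at h ⊢
  exact h.lift' f fun a b hab => (reachable_iff_reflTransGen _ _).1 (hf a b hab)

theorem Connected.of_adj_reachable {G : SimpleGraph V} {H : SimpleGraph W} (hG : G.Connected)
    (f : V → W) (hf : ∀ a b, G.Adj a b → H.Reachable (f a) (f b))
    (hcov : ∀ w, ∃ a, H.Reachable (f a) w) : H.Connected := by
  refine (connected_iff _).2 ⟨fun w₁ w₂ => ?_, hG.nonempty.map f⟩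
  obtain ⟨a, ha⟩ := hcov w₁
  obtain ⟨b, hb⟩ := hcov w₂
  exact ha.symm.trans ((Reachable.of_adj_reachable hf (hG.preconnected a b)).trans hb)

/-- Elimination of the vertex `v`: delete it and turn its neighbourhood into a clique. The
remaining vertices are labelled by `W` through `e`, meant to be a bijection onto `V ∖ {v}`. -/
def eliminate (G : SimpleGraph V) (v : V) (e : W → V) : SimpleGraph W where
  Adj a b := a ≠ b ∧ (G.Adj (e a) (e b) ∨ G.Adj v (e a) ∧ G.Adj v (e b))
  symm.symm _ _ := fun ⟨hne, h⟩ => ⟨hne.symm, h.imp (fun h => h.symm) And.symm⟩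

variable {G : SimpleGraph V} {v : V} {e : W → V}

theorem induce_reachable_of_eq_or_adj {s : Set V} {a b : s} (h : a.1 = b.1 ∨ G.Adj a b) :
    (G.induce s).Reachable a b := by
  rcases h with h | h
  · rw [Subtype.ext h]
  · exact Adj.reachable h

theorem exists_adj_of_induce_connected {s : Set V} (hs : (G.induce s).Connected) {x : V}
    (hx : x ∈ s) (hsx : s ≠ {x}) : ∃ z ∈ s, G.Adj x z := by
  obtain ⟨y, hy, hyx⟩ : ∃ y ∈ s, y ≠ x := by
    by_contra! h
    exact hsx (Set.eq_singleton_iff_unique_mem.2 ⟨hx, h⟩)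
  obtain ⟨w⟩ := hs.preconnected ⟨x, hx⟩ ⟨y, hy⟩
  cases w with
  | nil => exact absurd rfl hyx
  | cons h _ => exact ⟨_, Subtype.prop _, h⟩

theorem exists_preimage_mem_adj (hrange : {v}ᶜ ⊆ Set.range e) {s : Set V}
    (hs : (G.induce s).Connected) (hsv : s ≠ {v}) : ∃ w, e w ∈ s ∧ (v ∈ s → G.Adj v (e w)) := by
  by_cases hvs : v ∈ s
  · obtain ⟨z, hz, hvz⟩ := exists_adj_of_induce_connected hs hvs hsv
    obtain ⟨w, rfl⟩ := hrange hvz.ne.symm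
    exact ⟨w, hz, fun _ => hvz⟩
  · obtain ⟨x, hx⟩ := Set.nonempty_coe_sort.1 hs.nonempty
    obtain ⟨w, rfl⟩ := hrange (ne_of_mem_of_not_mem hx hvs)
    exact ⟨w, hx, fun h => absurd h hvs⟩

-- A walk in `G[s]` is pushed to `e ⁻¹' s` by sending `v` to a neighbour of `v` in `s`.
theorem induce_connected_eliminate_preimage (he : Function.Injective e)
    (hrange : Set.range e = {v}ᶜ) {s : Set V} (hs : (G.induce s).Connected) (hsv : s ≠ {v}) :
    ((G.eliminate v e).induce (e ⁻¹' s)).Connected := by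
  classical
  have he_ne (w : W) : e w ≠ v := Set.mem_compl_singleton_iff.1 (hrange ▸ Set.mem_range_self w)
  have hpre : {v}ᶜ ⊆ Set.range e := hrange.symm.subset
  obtain ⟨w₀, hw₀s, hw₀v⟩ := exists_preimage_mem_adj hpre hs hsv
  have : Nonempty W := ⟨w₀⟩
  let g : V → W := fun x => if x = v then w₀ else Function.invFun e x
  have hg_ne {x : V} (hx : x ≠ v) : e (g x) = x := by
    simp only [g, if_neg hx]; exact Function.invFun_eq (hpre hx)
  have hg_e (w : W) : g (e w) = w := by
    simp only [g, if_neg (he_ne w)]; exact Function.leftInverse_invFun he w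
  have hg_mem (x : s) : e (g x) ∈ s := by
    by_cases hx : x.1 = v
    · simpa [g, hx] using hw₀s
    · rw [hg_ne hx]; exact x.2
  have hg_adj {x y : V} (hxs : x ∈ s) (hys : y ∈ s) (hxy : G.Adj x y) :
      G.Adj (e (g x)) (e (g y)) ∨ G.Adj v (e (g x)) ∧ G.Adj v (e (g y)) := by
    have hv_adj {y : V} (hvs : v ∈ s) (hvy : G.Adj v y) :
        G.Adj v (e (g v)) ∧ G.Adj v (e (g y)) := by
      rw [hg_ne hvy.ne.symm]
      exact ⟨by simpa [g] using hw₀v hvs, hvy⟩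
    by_cases hx : x = v
    · subst hx
      exact .inr (hv_adj hxs hxy)
    by_cases hy : y = v
    · subst hy
      exact .inr (hv_adj hys hxy.symm).symm
    rw [hg_ne hx, hg_ne hy]
    exact .inl hxy
  refine hs.of_adj_reachable (fun x => ⟨g x, hg_mem x⟩) (fun x y hxy => ?_) fun w =>
    ⟨⟨e w, w.2⟩, by simp only [hg_e]; rfl⟩
  apply induce_reachable_of_eq_or_adj
  by_cases hxy' : g x = g y
  · exact .inl hxy'
  · exact .inr ⟨hxy', hg_adj x.2 y.2 hxy⟩

theorem exists_induce_connected_preimage_eq (he : Function.Injective e) (hv : v ∉ Set.range e)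
    {t : Set W} (ht : ((G.eliminate v e).induce t).Connected) :
    ∃ s : Set V, (G.induce s).Connected ∧ e ⁻¹' s = t := by
  by_cases hN : ∃ w ∈ t, G.Adj v (e w)
  · obtain ⟨w₀, hw₀t, hw₀⟩ := hN
    refine ⟨insert v (e '' t), ht.of_adj_reachable (fun w => ⟨e w, .inr ⟨w, w.2, rfl⟩⟩)
      (fun a b hab => ?_) ?_, ?_⟩
    · rcases hab.2 with h | ⟨ha, hb⟩
      · exact Adj.reachable h
      · have hva : (G.induce (insert v (e '' t))).Adj ⟨v, .inl rfl⟩ ⟨e a, .inr ⟨a, a.2, rfl⟩⟩ :=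
          ha
        exact hva.symm.reachable.trans (Adj.reachable hb)
    · rintro ⟨x, rfl | ⟨w, hw, rfl⟩⟩
      · exact ⟨⟨w₀, hw₀t⟩, Adj.reachable hw₀.symm⟩
      · exact ⟨⟨w, hw⟩, .refl _⟩
    · ext w
      simpa [he.eq_iff] using fun h : e w = v => absurd ⟨w, h⟩ hv
  · push Not at hN
    refine ⟨e '' t, ht.of_adj_reachable (fun w => ⟨e w, w, w.2, rfl⟩)
      (fun a b hab => ?_) ?_, he.preimage_image t⟩
    · exact Adj.reachable (hab.2.resolve_right fun h => hN a a.2 h.1)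
    · rintro ⟨_, w, hw, rfl⟩
      exact ⟨⟨w, hw⟩, .refl _⟩

end SimpleGraph

theorem Fin.val_succAbove {n : ℕ} (p : Fin (n + 1)) (m : Fin n) :
    (p.succAbove m : ℕ) = if m.1 < p.1 then m.1 else m.1 + 1 := by
  simp only [Fin.succAbove, Fin.lt_def, Fin.val_castSucc]
  split_ifs <;> simp

theorem almostPath_eliminate {n k : ℕ} (hk : k ≤ n) :
    (almostPath (n + 1) (k + 1)).eliminate ⟨k, by omega⟩ (Fin.succAbove ⟨k, by omega⟩) =
      pathTriangle n k := by
  ext a b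
  simp only [SimpleGraph.eliminate, almostPath, pathTriangle, SimpleGraph.fromRel_adj, ne_eq,
    Fin.ext_iff, Fin.val_succAbove]
  split_ifs <;> omega

section Arrangement

variable {n : ℕ}

theorem linForm_apply (I : Finset (Fin n)) (x : Fin n → ℚ) : linForm I x = ∑ i ∈ I, x i := by
  simp [linForm]

theorem linForm_singleton (p : Fin n) : linForm {p} = LinearMap.proj p := by
  simp [linForm]

theorem ker_linForm_ne_top {I : Finset (Fin n)} (hI : I.Nonempty) :
    LinearMap.ker (linForm I) ≠ ⊤ := by
  rw [Ne, LinearMap.ker_eq_top]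
  intro h
  have := LinearMap.congr_fun h fun _ => 1
  simp [linForm_apply, hI.ne_empty] at this

theorem insertZero_apply_succAbove (p : Fin (n + 2)) (x : Fin (n + 1) → ℚ) (m : Fin (n + 1)) :
    insertZero p x (p.succAbove m) = x m := by
  have h : ∃ m', p.succAbove m' = p.succAbove m := ⟨m, rfl⟩
  rw [insertZero, LinearMap.pi_apply, dif_pos h, LinearMap.proj_apply,
    Fin.succAbove_right_injective h.choose_spec]

theorem insertZero_apply_self (p : Fin (n + 2)) (x : Fin (n + 1) → ℚ) : insertZero p x p = 0 := by
  rw [insertZero, LinearMap.pi_apply, dif_neg fun ⟨m, hm⟩ => Fin.succAbove_ne p m hm]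
  rfl

theorem proj_comp_insertZero (p : Fin (n + 2)) :
    (LinearMap.proj p : (Fin (n + 2) → ℚ) →ₗ[ℚ] ℚ).comp (insertZero p) = 0 :=
  LinearMap.ext (insertZero_apply_self p)

theorem comap_insertZero_ker_linForm (p : Fin (n + 2)) (I : Finset (Fin (n + 2))) :
    (LinearMap.ker (linForm I)).comap (insertZero p) =
      LinearMap.ker (linForm (I.preimage p.succAbove Fin.succAbove_right_injective.injOn)) := by
  rw [← LinearMap.ker_comp]
  congr 1
  refine LinearMap.ext fun x => ?_
  rw [LinearMap.comp_apply, linForm_apply, linForm_apply, ← Finset.sum_preimage p.succAbove I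
    Fin.succAbove_right_injective.injOn _ fun i _ hi => ?_]
  · simp only [insertZero_apply_succAbove]
  · rw [Fin.range_succAbove, Set.mem_compl_singleton_iff, not_not] at hi
    rw [hi, insertZero_apply_self]

end Arrangement

section ConnSet

variable {n : ℕ}

theorem connSet_iff {G : SimpleGraph (Fin n)} {I : Finset (Fin n)} :
    ConnSet G I ↔ (G.induce (I : Set (Fin n))).Connected :=
  ⟨And.right, fun h => ⟨Finset.coe_nonempty.1 (Set.nonempty_coe_sort.1 h.nonempty), h⟩⟩

variable {G : SimpleGraph (Fin (n + 1))} {p : Fin (n + 1)}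

theorem ConnSet.preimage_succAbove {I : Finset (Fin (n + 1))} (hI : ConnSet G I) (hIp : I ≠ {p}) :
    ConnSet (G.eliminate p p.succAbove)
      (I.preimage p.succAbove Fin.succAbove_right_injective.injOn) := by
  rw [connSet_iff, Finset.coe_preimage]
  exact G.induce_connected_eliminate_preimage Fin.succAbove_right_injective (Fin.range_succAbove p)
    (connSet_iff.1 hI) (by exact_mod_cast hIp)

theorem ConnSet.exists_preimage_succAbove_eq {J : Finset (Fin n)}
    (hJ : ConnSet (G.eliminate p p.succAbove) J) :
    ∃ I : Finset (Fin (n + 1)), ConnSet G I ∧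
      I.preimage p.succAbove Fin.succAbove_right_injective.injOn = J := by
  obtain ⟨s, hs, hsJ⟩ := G.exists_induce_connected_preimage_eq Fin.succAbove_right_injective
    (by simp) (connSet_iff.1 hJ)
  refine ⟨s.toFinite.toFinset, connSet_iff.2 (by rwa [Set.Finite.coe_toFinset]), ?_⟩
  exact Finset.coe_injective (by simpa using hsJ)

end ConnSet

theorem image_comap_insertZero_csa {n : ℕ} (G : SimpleGraph (Fin (n + 2))) (p : Fin (n + 2)) :
    (fun H => Submodule.comap (insertZero p) H) ''
        (csa G \ {LinearMap.ker (LinearMap.proj p : (Fin (n + 2) → ℚ) →ₗ[ℚ] ℚ)}) =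
      csa (G.eliminate p p.succAbove) := by
  ext H
  constructor
  · rintro ⟨_, ⟨⟨I, hI, rfl⟩, hIp⟩, rfl⟩
    refine ⟨_, hI.preimage_succAbove ?_, comap_insertZero_ker_linForm p I⟩
    rintro rfl
    exact hIp (by rw [linForm_singleton]; rfl)
  · rintro ⟨J, hJ, rfl⟩
    obtain ⟨I, hI, rfl⟩ := hJ.exists_preimage_succAbove_eq
    refine ⟨_, ⟨⟨I, hI, rfl⟩, fun hIp => ker_linForm_ne_top hJ.1 ?_⟩,
      comap_insertZero_ker_linForm p I⟩
    rw [← comap_insertZero_ker_linForm, Set.mem_singleton_iff.1 hIp, ← LinearMap.ker_comp,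
      proj_comp_insertZero, LinearMap.ker_zero]

/-- For `1 < k < n`, the connected subgraph arrangement
`𝒜_{Δ_{n,k}}` in `ℚ^{n+1}` is the restriction of `𝒜_{A_{n+1,k+1}}` (in `ℚ^{n+2}`) to
the coordinate hyperplane `ker x_{k+1}`: identifying `ker x_{k+1}` with `ℚ^{n+1}` by
deleting the `(k+1)`-st coordinate (via `insertZero`), the set
`{H ∩ ker x_{k+1} : H ∈ 𝒜_{A_{n+1,k+1}}, H ≠ ker x_{k+1}}` equals the set of
hyperplanes of `𝒜_{Δ_{n,k}}`. (In the 0-based indexing of the formalization the paper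
coordinate `x_{k+1}` is the projection onto the coordinate `⟨k, _⟩ : Fin (n+2)`.) -/
theorem csa_pathTriangle_restriction (n k : ℕ) (h2 : k < n) :
    (fun H => Submodule.comap (insertZero (⟨k, by omega⟩ : Fin (n + 2))) H) ''
        (csa (almostPath (n + 1) (k + 1)) \
          {LinearMap.ker (LinearMap.proj (⟨k, by omega⟩ : Fin (n + 2)) :
            (Fin (n + 2) → ℚ) →ₗ[ℚ] ℚ)}) =
      csa (pathTriangle n k) := by
  rw [← almostPath_eliminate h2.le]
  exact image_comap_insertZero_csa _ _
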